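/- Let m ≥ 3 and let n be a positive even integer with 2^m < n ≤ 2^{m+1}. Then ‖n‖₂ = m + 2 if and only if n is of one of the following forms: (a) n = 2^{m₁} + 2^{m₂} + 2^{m₃} with m = m₁ > m₂ > m₃ ≥ 1; (b) n = 2^{m₁} + 2^{m₂} + 2^{m₃} + 2^{m₄} with m = m₁ > m₂ > m₃ > m₄ ≥ 2 and m₁ + m₄ = m₂ + m₃; (c) n = 2^{m₁} + 2^{m₁−3} + 2^{m₂} + 2^{m₂−1} with m = m₁ ≥ m₂ + 3 ≥ 6; (d) n = 2^m + 2^{m−5} + 2^{m−6} + 2^{m−7} with m ≥ 10. -/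

import Mathlib

/-- `CanRepr l n m` means `n` can be expressed using exactly `m` copies of `l`
    combined with addition and multiplication (and parentheses). -/
inductive CanRepr (l : ℕ) : ℕ → ℕ → Prop
  | base : CanRepr l l 1
  | add {a b p q : ℕ} : CanRepr l a p → CanRepr l b q → CanRepr l (a + b) (p + q)
  | mul {a b p q : ℕ} : CanRepr l a p → CanRepr l b q → CanRepr l (a * b) (p + q)

/-- The `l`-complexity `‖n‖_l`: the minimal number of `l`'s needed to express `n`
    using only addition and multiplication. (By convention `sInf ∅ = 0`.) -/
noncomputable def complexity (l n : ℕ) : ℕ := sInf {m | CanRepr l n m}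

/-- The four special forms of Corollary 7 / Theorem 1.2(2). -/
def GoodForm (m n : ℕ) : Prop :=
  (∃ m₂ m₃, m > m₂ ∧ m₂ > m₃ ∧ 1 ≤ m₃ ∧ n = 2 ^ m + 2 ^ m₂ + 2 ^ m₃) ∨
  (∃ m₂ m₃ m₄, m > m₂ ∧ m₂ > m₃ ∧ m₃ > m₄ ∧ 2 ≤ m₄ ∧ m + m₄ = m₂ + m₃ ∧
    n = 2 ^ m + 2 ^ m₂ + 2 ^ m₃ + 2 ^ m₄) ∨
  (∃ m₂, m₂ + 3 ≤ m ∧ 6 ≤ m₂ + 3 ∧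
    n = 2 ^ m + 2 ^ (m - 3) + 2 ^ m₂ + 2 ^ (m₂ - 1)) ∨
  (10 ≤ m ∧ n = 2 ^ m + 2 ^ (m - 5) + 2 ^ (m - 6) + 2 ^ (m - 7))

/-!
An expression of `n ∈ (2^m, 2^(m+1)]` with at most `m + 1` twos has nothing to spare: a sum
must be `c + 2` and a product must have both factors in the upper halves of their dyadic
intervals, so by induction `n = 2^m + 2^j`. With `m + 2` twos there is one unit of slack. A sum
is then `c + 2` or `c + 4`, and a product `a * b` either has two factors of the shape
`2^p + 2^j`, which gives forms (a) and (b), or has one such factor while the other lies one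
level lower and is, by induction, of that shape or of one of the forms (a)–(d). In the last
case `2^m < a * b` leaves only a few gap patterns between the binary digits. The others are
excluded by comparing ratios: if `a / 2^p ≤ A / 2^s` and `b / 2^q ≤ B / 2^t` with
`A * B ≤ 2^(s+t+1)`, then `a * b ≤ 2^(p+q+1)`. Conversely, each of (a)–(d) has an explicit
expression with `m + 2` twos and is not of the form `2^m + 2^j`.
-/

namespace CanRepr

variable {l n k : ℕ}

theorem of_eq {n' k' : ℕ} (h : CanRepr l n k) (hn : n = n') (hk : k = k') : CanRepr l n' k' :=
  hn ▸ hk ▸ h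

theorem one_le (h : CanRepr l n k) : 1 ≤ k := by
  induction h <;> omega

theorem dvd (h : CanRepr l n k) : l ∣ n := by
  induction h with
  | base => exact dvd_rfl
  | add _ _ iha ihb => exact dvd_add iha ihb
  | mul _ _ iha _ => exact iha.mul_right _

theorem pos (hl : 0 < l) (h : CanRepr l n k) : 0 < n := by
  induction h with
  | base => exact hl
  | add _ _ iha _ => omega
  | mul _ _ iha ihb => exact Nat.mul_pos iha ihb

theorem le (hl : 0 < l) (h : CanRepr l n k) : l ≤ n :=
  Nat.le_of_dvd (h.pos hl) h.dvd

theorem le_pow (hl : 2 ≤ l) (h : CanRepr l n k) : n ≤ l ^ k := by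
  induction h with
  | base => simp
  | @add a b p q ha hb iha ihb =>
    have hp : 2 ≤ l ^ p := hl.trans (Nat.le_self_pow (by have := ha.one_le; omega) l)
    have hq : 2 ≤ l ^ q := hl.trans (Nat.le_self_pow (by have := hb.one_le; omega) l)
    calc a + b ≤ l ^ p + l ^ q := Nat.add_le_add iha ihb
      _ ≤ l ^ p * l ^ q := Nat.add_le_mul hp hq
      _ = l ^ (p + q) := (pow_add l p q).symm
  | mul _ _ iha ihb => rw [pow_add]; exact Nat.mul_le_mul iha ihb

theorem pow (hk : 1 ≤ k) : CanRepr l (l ^ k) k := by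
  induction k, hk using Nat.le_induction with
  | base => exact base.of_eq (pow_one l).symm rfl
  | succ k _ ih => exact (mul base ih).of_eq (pow_succ' l k).symm (Nat.add_comm 1 k)

theorem pow_mul (t : ℕ) (h : CanRepr l n k) : CanRepr l (l ^ t * n) (t + k) := by
  induction t with
  | zero => exact h.of_eq (by simp) (by simp)
  | succ t ih => exact (mul base ih).of_eq (by ring) (by ring)

theorem pow_add_pow {a b : ℕ} (hba : b ≤ a) (hb : 1 ≤ b) :
    CanRepr l (l ^ a + l ^ b) (a + 1) := by
  obtain ⟨c, rfl⟩ : ∃ c, b = c + 1 := ⟨b - 1, by omega⟩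
  obtain ⟨d, rfl⟩ : ∃ d, a = c + 1 + d := ⟨a - (c + 1), by omega⟩
  exact ((add (pow (k := d + 1) (by omega)) base).pow_mul c).of_eq (by ring) (by ring)

theorem pow_add_pow_add_pow {a b c : ℕ} (hba : b ≤ a) (hcb : c ≤ b) (hc : 1 ≤ c) :
    CanRepr l (l ^ a + l ^ b + l ^ c) (a + 2) := by
  obtain ⟨e, rfl⟩ : ∃ e, c = e + 1 := ⟨c - 1, by omega⟩
  obtain ⟨f, rfl⟩ : ∃ f, b = e + 1 + f := ⟨b - (e + 1), by omega⟩
  obtain ⟨g, rfl⟩ : ∃ g, a = e + 1 + f + g := ⟨a - (e + 1 + f), by omega⟩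
  have inner := add (pow_add_pow (l := l) (a := f + g + 1) (b := f + 1) (by omega) (by omega)) base
  exact (inner.pow_mul e).of_eq (by ring) (by ring)

end CanRepr

theorem complexity_le {l n k : ℕ} (h : CanRepr l n k) : complexity l n ≤ k :=
  Nat.sInf_le h

theorem canRepr_complexity {l n : ℕ} (h : ∃ k, CanRepr l n k) :
    CanRepr l n (complexity l n) :=
  Nat.sInf_mem h

-- An inequality `x * 2 ^ s ≤ X * 2 ^ p` is the ratio bound `x / 2 ^ p ≤ X / 2 ^ s`.
theorem two_pow_add_two_pow_mul_le {p i c : ℕ} (h : i + c ≤ p) :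
    (2 ^ p + 2 ^ i) * 2 ^ c ≤ (2 ^ c + 1) * 2 ^ p := by
  have : 2 ^ (i + c) ≤ 2 ^ p := Nat.pow_le_pow_right two_pos h
  calc (2 ^ p + 2 ^ i) * 2 ^ c = 2 ^ c * 2 ^ p + 2 ^ (i + c) := by ring
    _ ≤ (2 ^ c + 1) * 2 ^ p := by linarith

theorem three_two_pows_mul_le {r u v f g : ℕ} (hu : u + f ≤ r) (hv : v + g ≤ u) :
    (2 ^ r + 2 ^ u + 2 ^ v) * 2 ^ (f + g) ≤ (2 ^ (f + g) + 2 ^ g + 1) * 2 ^ r := by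
  have h₁ : 2 ^ (u + f + g) ≤ 2 ^ (g + r) := Nat.pow_le_pow_right two_pos (by omega)
  have h₂ : 2 ^ (v + f + g) ≤ 2 ^ r := Nat.pow_le_pow_right two_pos (by omega)
  calc _ = 2 ^ (f + g) * 2 ^ r + 2 ^ (u + f + g) + 2 ^ (v + f + g) := by ring
    _ ≤ 2 ^ (f + g) * 2 ^ r + 2 ^ (g + r) + 2 ^ r := by linarith
    _ = _ := by ring

-- Under `r + w = u + v` the sum factors as `(2 ^ u + 2 ^ w) * (2 ^ (r - u) + 1)`.
theorem four_two_pows_mul_le {r u v w c e : ℕ} (hsum : r + w = u + v) (hc : u + c ≤ r)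
    (he : w + e ≤ u) :
    (2 ^ r + 2 ^ u + 2 ^ v + 2 ^ w) * 2 ^ (c + e) ≤ (2 ^ c + 1) * (2 ^ e + 1) * 2 ^ r := by
  have h₁ : 2 ^ (u + c + e) ≤ 2 ^ (e + r) := Nat.pow_le_pow_right two_pos (by omega)
  have h₂ : 2 ^ (v + c + e) ≤ 2 ^ (c + r) := Nat.pow_le_pow_right two_pos (by omega)
  have h₃ : 2 ^ (w + c + e) ≤ 2 ^ r := Nat.pow_le_pow_right two_pos (by omega)
  calc _ = 2 ^ (c + e) * 2 ^ r + 2 ^ (u + c + e) + 2 ^ (v + c + e) + 2 ^ (w + c + e) := by ring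
    _ ≤ 2 ^ (c + e) * 2 ^ r + 2 ^ (e + r) + 2 ^ (c + r) + 2 ^ r := by linarith
    _ = _ := by ring

theorem mul_le_two_pow_of_mul_two_pow_le {a b p q s t A B : ℕ} (ha : a * 2 ^ s ≤ A * 2 ^ p)
    (hb : b * 2 ^ t ≤ B * 2 ^ q) (hAB : A * B ≤ 2 ^ (s + t + 1)) :
    a * b ≤ 2 ^ (p + q + 1) := by
  refine Nat.le_of_mul_le_mul_right ?_ (pow_pos two_pos (s + t))
  calc a * b * 2 ^ (s + t) = (a * 2 ^ s) * (b * 2 ^ t) := by ring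
    _ ≤ (A * 2 ^ p) * (B * 2 ^ q) := Nat.mul_le_mul ha hb
    _ = A * B * 2 ^ (p + q) := by ring
    _ ≤ 2 ^ (s + t + 1) * 2 ^ (p + q) := Nat.mul_le_mul_right _ hAB
    _ = 2 ^ (p + q + 1) * 2 ^ (s + t) := by ring

theorem mul_le_two_pow_add {a b p q : ℕ} (ha : a ≤ 2 ^ p) (hb : b ≤ 2 ^ q) :
    a * b ≤ 2 ^ (p + q) :=
  pow_add 2 p q ▸ Nat.mul_le_mul ha hb

theorem two_pow_lt_of_two_pow_lt_mul {a b p q m : ℕ} (hb : b ≤ 2 ^ q) (hpq : p + q ≤ m)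
    (h : 2 ^ m < a * b) : 2 ^ p < a := by
  by_contra! ha
  have := (mul_le_two_pow_add ha hb).trans (Nat.pow_le_pow_right two_pos hpq)
  omega

theorem le_or_le_of_two_pow_lt_add {a b p q m c : ℕ} (ha : a ≤ 2 ^ p) (hb : b ≤ 2 ^ q)
    (hpq : p + q ≤ m + c) (h : 2 ^ m < a + b) : p ≤ c ∨ q ≤ c := by
  by_contra! hc
  obtain ⟨m, rfl⟩ : ∃ m', m = m' + 1 := ⟨m - 1, by omega⟩
  have : 2 ^ p ≤ 2 ^ m := Nat.pow_le_pow_right two_pos (by omega)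
  have : 2 ^ q ≤ 2 ^ m := Nat.pow_le_pow_right two_pos (by omega)
  rw [pow_succ] at h
  omega

theorem two_mul_two_pow_le {a b : ℕ} (h : a < b) : 2 * 2 ^ a ≤ 2 ^ b :=
  pow_succ' 2 a ▸ Nat.pow_le_pow_right two_pos h

theorem ne_two_pow_of_lt_of_lt {R X e : ℕ} (h₁ : 2 ^ X < R) (h₂ : R < 2 * 2 ^ X) :
    R ≠ 2 ^ e := by
  rintro rfl
  rw [← pow_succ'] at h₂
  have := (Nat.pow_lt_pow_iff_right one_lt_two).1 h₁
  have := (Nat.pow_lt_pow_iff_right one_lt_two).1 h₂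
  omega

-- `2 ^ m + 2 ^ j` with `1 ≤ j ≤ m`, the case `j = m` written as `2 ^ (m + 1)` so that it also
-- covers `2` at `m = 0`.
def TwoBitForm (m n : ℕ) : Prop :=
  n = 2 ^ (m + 1) ∨ ∃ j, 1 ≤ j ∧ j < m ∧ n = 2 ^ m + 2 ^ j

namespace TwoBitForm

variable {m n : ℕ}

theorem of_pow_add_pow {j : ℕ} (hj : 1 ≤ j) (hjm : j ≤ m) : TwoBitForm m (2 ^ m + 2 ^ j) := by
  rcases hjm.lt_or_eq with hjm | rfl
  · exact Or.inr ⟨j, hj, hjm, rfl⟩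
  · exact Or.inl (by ring)

theorem two_pow_lt (h : TwoBitForm m n) : 2 ^ m < n := by
  rcases h with rfl | ⟨j, -, -, rfl⟩
  · exact Nat.pow_lt_pow_right one_lt_two m.lt_succ_self
  · have := Nat.two_pow_pos j
    omega

theorem canRepr (h : TwoBitForm m n) : CanRepr 2 n (m + 1) := by
  rcases h with rfl | ⟨j, hj, hjm, rfl⟩
  · exact CanRepr.pow (by omega)
  · exact CanRepr.pow_add_pow hjm.le hj

theorem two_pow_mul (s : ℕ) (h : TwoBitForm m n) : TwoBitForm (m + s) (2 ^ s * n) := by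
  rcases h with rfl | ⟨j, hj, hjm, rfl⟩
  · exact Or.inl (by ring)
  · exact Or.inr ⟨j + s, by omega, by omega, by ring⟩

theorem add_two {c : ℕ} (hc : 2 ∣ c) (hc₂ : 2 ≤ c) (hle : c ≤ 2 ^ m)
    (hlb : 2 ^ m < c + 2) : TwoBitForm m (c + 2) := by
  have hm : m ≠ 0 := by
    rintro rfl
    omega
  have : 2 ∣ 2 ^ m := dvd_pow_self 2 hm
  obtain rfl : c = 2 ^ m := by omega
  exact of_pow_add_pow (j := 1) le_rfl (by omega)

theorem add_of_le_one {a b p q : ℕ} (ha : CanRepr 2 a p) (hb : CanRepr 2 b q) (hp : p ≤ 1)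
    (hpq : p + q ≤ m + 1) (hlb : 2 ^ m < a + b) : TwoBitForm m (a + b) := by
  obtain rfl : a = 2 :=
    le_antisymm ((ha.le_pow le_rfl).trans (Nat.pow_le_pow_right two_pos hp)) (ha.le two_pos)
  have hb₁ : b ≤ 2 ^ m :=
    (hb.le_pow le_rfl).trans (Nat.pow_le_pow_right two_pos (by have := ha.one_le; omega))
  rw [add_comm] at hlb ⊢
  exact add_two hb.dvd (hb.le two_pos) hb₁ hlb

theorem mul {p q a b : ℕ} (ha : TwoBitForm p a) (hb : TwoBitForm q b)
    (hlb : 2 ^ (p + q + 1) < a * b) : TwoBitForm (p + q + 1) (a * b) := by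
  rcases ha with rfl | ⟨i, hi, hip, rfl⟩
  · rw [show p + q + 1 = q + (p + 1) by omega]
    exact hb.two_pow_mul _
  rcases hb with rfl | ⟨j, hj, hjq, rfl⟩
  · rw [mul_comm, show p + q + 1 = p + (q + 1) by omega]
    exact two_pow_mul _ (Or.inr ⟨i, hi, hip, rfl⟩)
  rcases (by omega : (p = i + 1 ∧ q = j + 1) ∨ i + 2 ≤ p ∨ j + 2 ≤ q)
    with ⟨rfl, rfl⟩ | hp | hq
  · exact Or.inr ⟨i + j, by omega, by omega, by ring⟩
  · exact absurd hlb (mul_le_two_pow_of_mul_two_pow_le (two_pow_add_two_pow_mul_le hp)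
      (two_pow_add_two_pow_mul_le (c := 1) hjq) (by norm_num)).not_gt
  · exact absurd hlb (mul_le_two_pow_of_mul_two_pow_le (two_pow_add_two_pow_mul_le (c := 1) hip)
      (two_pow_add_two_pow_mul_le hq) (by norm_num)).not_gt

theorem of_canRepr {n k : ℕ} (h : CanRepr 2 n k) :
    ∀ m, k ≤ m + 1 → 2 ^ m < n → TwoBitForm m n := by
  induction h with
  | base =>
    intro m _ hlb
    obtain rfl : m = 0 := by
      have := (Nat.pow_lt_pow_iff_right one_lt_two).1 (show 2 ^ m < 2 ^ 1 by simpa using hlb)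
      omega
    exact Or.inl rfl
  | @add a b p q ha hb _ _ =>
    intro m hk hlb
    rcases le_or_le_of_two_pow_lt_add (ha.le_pow le_rfl) (hb.le_pow le_rfl) hk hlb with hp | hq
    · exact add_of_le_one ha hb hp hk hlb
    · rw [add_comm] at hlb ⊢
      exact add_of_le_one hb ha hq (by omega) hlb
  | @mul a b p q ha hb iha ihb =>
    intro m hk hlb
    obtain ⟨p, rfl⟩ : ∃ p', p = p' + 1 := ⟨p - 1, by have := ha.one_le; omega⟩
    obtain ⟨q, rfl⟩ : ∃ q', q = q' + 1 := ⟨q - 1, by have := hb.one_le; omega⟩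
    have hab := mul_le_two_pow_add (ha.le_pow le_rfl) (hb.le_pow le_rfl)
    obtain rfl : m = p + q + 1 := by
      have := (Nat.pow_lt_pow_iff_right one_lt_two).1 (hlb.trans_le hab)
      omega
    have hahi : 2 ^ p < a := two_pow_lt_of_two_pow_lt_mul (hb.le_pow le_rfl) (by omega) hlb
    have hbhi : 2 ^ q < b :=
      two_pow_lt_of_two_pow_lt_mul (ha.le_pow le_rfl) (by omega) (mul_comm a b ▸ hlb)
    exact (iha p le_rfl hahi).mul (ihb q le_rfl hbhi) hlb

theorem goodForm_mul {p q a b : ℕ} (ha : TwoBitForm p a) (hb : TwoBitForm q b)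
    (hub : a * b ≤ 2 ^ (p + q + 1)) : GoodForm (p + q) (a * b) := by
  have hpa := ha.two_pow_lt
  have hqb := hb.two_pow_lt
  rcases ha with rfl | ⟨i, hi, hip, rfl⟩
  · have := Nat.mul_lt_mul_of_pos_left hqb (pow_pos two_pos (p + 1))
    rw [← pow_add, show p + 1 + q = p + q + 1 by omega] at this
    omega
  rcases hb with rfl | ⟨j, hj, hjq, rfl⟩
  · have := Nat.mul_lt_mul_of_pos_right hpa (pow_pos two_pos (q + 1))
    rw [← pow_add, show p + (q + 1) = p + q + 1 by omega] at this
    omega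
  have hexp : (2 ^ p + 2 ^ i) * (2 ^ q + 2 ^ j)
      = 2 ^ (p + q) + 2 ^ (p + j) + 2 ^ (q + i) + 2 ^ (i + j) := by ring
  rw [hexp] at hub ⊢
  rcases lt_trichotomy (q + i) (p + j) with h | h | h
  · exact Or.inr (Or.inl ⟨p + j, q + i, i + j, by omega, h, by omega, by omega, by omega, rfl⟩)
  · rcases (by omega : j + 2 ≤ q ∨ j + 1 = q) with hjq' | hjq'
    · refine Or.inl ⟨p + j + 1, i + j, by omega, by omega, by omega, ?_⟩
      rw [h]
      ring
    · -- `p = i + 1` and `q = j + 1`: the two middle digits carry into `2 ^ (p + q + 1)`.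
      have hcarry : 2 ^ (p + q + 1) = 2 ^ (p + q) + 2 ^ (p + j) + 2 ^ (q + i) := by
        rw [h, show p + q + 1 = p + j + 2 by omega, show p + q = p + j + 1 by omega]
        ring
      have := Nat.two_pow_pos (i + j)
      omega
  · refine Or.inr (Or.inl ⟨q + i, p + j, i + j, by omega, h, by omega, by omega, by omega, ?_⟩)
    ring

end TwoBitForm

-- Forms (c) and (d) without truncated subtraction: `x = m₂ - 1`, `y = m - 3` in (c) and
-- `x = m - 7` in (d).
theorem goodForm_iff {m n : ℕ} : GoodForm m n ↔
    (∃ u v, m > u ∧ u > v ∧ 1 ≤ v ∧ n = 2 ^ m + 2 ^ u + 2 ^ v) ∨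
    (∃ u v w, m > u ∧ u > v ∧ v > w ∧ 2 ≤ w ∧ m + w = u + v ∧
      n = 2 ^ m + 2 ^ u + 2 ^ v + 2 ^ w) ∨
    (∃ x y, 2 ≤ x ∧ x < y ∧ m = y + 3 ∧ n = 2 ^ (y + 3) + 2 ^ y + 2 ^ (x + 1) + 2 ^ x) ∨
    (∃ x, 3 ≤ x ∧ m = x + 7 ∧ n = 2 ^ (x + 7) + 2 ^ (x + 2) + 2 ^ (x + 1) + 2 ^ x) := by
  refine or_congr Iff.rfl (or_congr Iff.rfl (or_congr ⟨?_, ?_⟩ ⟨?_, ?_⟩))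
  · rintro ⟨m₂, h₁, h₂, rfl⟩
    obtain ⟨x, rfl⟩ : ∃ x, m₂ = x + 1 := ⟨m₂ - 1, by omega⟩
    obtain ⟨y, rfl⟩ : ∃ y, m = y + 3 := ⟨m - 3, by omega⟩
    exact ⟨x, y, by omega, by omega, rfl, by simp⟩
  · rintro ⟨x, y, hx, hxy, rfl, rfl⟩
    exact ⟨x + 1, by omega, by omega, by simp⟩
  · rintro ⟨hm, rfl⟩
    obtain ⟨x, rfl⟩ : ∃ x, m = x + 7 := ⟨m - 7, by omega⟩
    refine ⟨x, by omega, rfl, ?_⟩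
    rw [show x + 7 - 5 = x + 2 by omega, show x + 7 - 6 = x + 1 by omega, Nat.add_sub_cancel]
  · rintro ⟨x, hx, rfl, rfl⟩
    refine ⟨by omega, ?_⟩
    rw [show x + 7 - 5 = x + 2 by omega, show x + 7 - 6 = x + 1 by omega, Nat.add_sub_cancel]

namespace GoodForm

variable {m n : ℕ}

theorem canRepr (h : GoodForm m n) : CanRepr 2 n (m + 2) := by
  have six : CanRepr 2 6 3 := CanRepr.pow_add_pow (a := 2) (b := 1) (by norm_num) le_rfl
  rcases goodForm_iff.1 h with ⟨u, v, hu, hv, hv₁, rfl⟩ |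
    ⟨u, v, w, hu, hv, hw, hw₂, hsum, rfl⟩ | ⟨x, y, hx, hxy, rfl, rfl⟩ |
    ⟨x, hx, rfl, rfl⟩
  · exact CanRepr.pow_add_pow_add_pow hu.le hv.le hv₁
  · -- `n = (2 ^ (u - 1) + 2 ^ (w - 1)) * (2 ^ (m - u + 1) + 2)`
    obtain ⟨u, rfl⟩ : ∃ u', u = u' + 1 := ⟨u - 1, by omega⟩
    obtain ⟨w, rfl⟩ : ∃ w', w = w' + 1 := ⟨w - 1, by omega⟩
    obtain ⟨d, rfl⟩ : ∃ d, m = u + 1 + d := ⟨m - (u + 1), by omega⟩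
    obtain rfl : v = w + 1 + d := by omega
    exact (CanRepr.mul (CanRepr.pow_add_pow (a := u) (b := w) (by omega) (by omega))
      (CanRepr.pow_add_pow (a := d + 1) (b := 1) (by omega) le_rfl)).of_eq (by ring) (by omega)
  · -- `n = 6 * (2 ^ y + 2 ^ (y - 1) + 2 ^ (x - 1))`
    obtain ⟨x, rfl⟩ : ∃ x', x = x' + 1 := ⟨x - 1, by omega⟩
    obtain ⟨y, rfl⟩ : ∃ y', y = y' + 1 := ⟨y - 1, by omega⟩
    exact (CanRepr.mul six (CanRepr.pow_add_pow_add_pow (a := y + 1) (b := y) (c := x)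
      (by omega) (by omega) (by omega))).of_eq (by ring) (by omega)
  · -- `n = 2 ^ (x - 3) * 1080` and `1080 = 6 * 10 * 18`
    obtain ⟨t, rfl⟩ : ∃ t, x = t + 3 := ⟨x - 3, by omega⟩
    have ten : CanRepr 2 10 4 := CanRepr.pow_add_pow (a := 3) (b := 1) (by norm_num) le_rfl
    have eighteen : CanRepr 2 18 5 := CanRepr.pow_add_pow (a := 4) (b := 1) (by norm_num) le_rfl
    exact ((six.mul (ten.mul eighteen)).pow_mul t).of_eq (by ring) (by omega)

theorem two_pow_mul (s : ℕ) (h : GoodForm m n) : GoodForm (m + s) (2 ^ s * n) := by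
  refine goodForm_iff.2 ?_
  rcases goodForm_iff.1 h with ⟨u, v, hu, hv, hv₁, rfl⟩ |
    ⟨u, v, w, hu, hv, hw, hw₂, hsum, rfl⟩ | ⟨x, y, hx, hxy, rfl, rfl⟩ |
    ⟨x, hx, rfl, rfl⟩
  · exact Or.inl ⟨u + s, v + s, by omega, by omega, by omega, by ring⟩
  · exact Or.inr (Or.inl ⟨u + s, v + s, w + s, by omega, by omega, by omega, by omega, by omega,
      by ring⟩)
  · exact Or.inr (Or.inr (Or.inl ⟨x + s, y + s, by omega, by omega, by omega, by ring⟩))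
  · exact Or.inr (Or.inr (Or.inr ⟨x + s, by omega, by omega, by ring⟩))

theorem not_twoBitForm (h : GoodForm m n) : ¬TwoBitForm m n := by
  -- `n - 2 ^ m` would be a power of two, but in each form it lies strictly between two of them.
  intro ht
  obtain ⟨e, he⟩ : ∃ e, n = 2 ^ m + 2 ^ e := by
    rcases ht with rfl | ⟨j, -, -, rfl⟩
    · exact ⟨m, by ring⟩
    · exact ⟨j, rfl⟩
  have hpos := Nat.two_pow_pos
  rcases goodForm_iff.1 h with ⟨u, v, hu, hv, hv₁, rfl⟩ |
    ⟨u, v, w, hu, hv, hw, hw₂, hsum, rfl⟩ | ⟨x, y, hx, hxy, rfl, rfl⟩ |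
    ⟨x, hx, rfl, rfl⟩
  · have := two_mul_two_pow_le hv
    have := hpos v
    exact ne_two_pow_of_lt_of_lt (X := u) (by omega) (by omega)
      (show 2 ^ u + 2 ^ v = 2 ^ e by omega)
  · have := two_mul_two_pow_le hv
    have := two_mul_two_pow_le hw
    have := hpos w
    exact ne_two_pow_of_lt_of_lt (X := u) (by omega) (by omega)
      (show 2 ^ u + 2 ^ v + 2 ^ w = 2 ^ e by omega)
  · have hx₁ : 2 ^ (x + 1) = 2 * 2 ^ x := pow_succ' 2 x
    have := hpos x
    rcases (by omega : x + 1 < y ∨ y = x + 1) with hxy | rfl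
    · have := two_mul_two_pow_le hxy
      exact ne_two_pow_of_lt_of_lt (X := y) (by omega) (by omega)
        (show 2 ^ y + 2 ^ (x + 1) + 2 ^ x = 2 ^ e by omega)
    · have hx₂ : 2 ^ (x + 2) = 2 * 2 ^ (x + 1) := pow_succ' 2 (x + 1)
      exact ne_two_pow_of_lt_of_lt (X := x + 2) (by omega) (by omega)
        (show 2 ^ (x + 1) + 2 ^ (x + 1) + 2 ^ x = 2 ^ e by omega)
  · have hx₁ : 2 ^ (x + 1) = 2 * 2 ^ x := pow_succ' 2 x
    have hx₂ : 2 ^ (x + 2) = 2 * 2 ^ (x + 1) := pow_succ' 2 (x + 1)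
    have := hpos x
    exact ne_two_pow_of_lt_of_lt (X := x + 2) (by omega) (by omega)
      (show 2 ^ (x + 2) + 2 ^ (x + 1) + 2 ^ x = 2 ^ e by omega)

end GoodForm

theorem not_two_pow_lt_mul_three_two_pows {p i r u v c f g : ℕ} (ha : i + c ≤ p)
    (hu : u + f ≤ r) (hv : v + g ≤ u)
    (hAB : (2 ^ c + 1) * (2 ^ (f + g) + 2 ^ g + 1) ≤ 2 ^ (c + (f + g) + 1)) :
    ¬2 ^ (p + r + 1) < (2 ^ p + 2 ^ i) * (2 ^ r + 2 ^ u + 2 ^ v) :=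
  (mul_le_two_pow_of_mul_two_pow_le (two_pow_add_two_pow_mul_le ha)
    (three_two_pows_mul_le hu hv) hAB).not_gt

theorem not_two_pow_lt_mul_four_two_pows {p i r u v w c d e : ℕ} (hsum : r + w = u + v)
    (ha : i + c ≤ p) (hu : u + d ≤ r) (hw : w + e ≤ u)
    (hAB : (2 ^ c + 1) * ((2 ^ d + 1) * (2 ^ e + 1)) ≤ 2 ^ (c + (d + e) + 1)) :
    ¬2 ^ (p + r + 1) < (2 ^ p + 2 ^ i) * (2 ^ r + 2 ^ u + 2 ^ v + 2 ^ w) :=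
  (mul_le_two_pow_of_mul_two_pow_le (two_pow_add_two_pow_mul_le ha)
    (four_two_pows_mul_le hsum hu hw) hAB).not_gt

theorem twoBitForm_or_goodForm_mul_three_two_pows {p i r u v : ℕ} (hi : 1 ≤ i) (hip : i < p)
    (hv : 1 ≤ v) (hvu : v < u) (hur : u < r)
    (hlb : 2 ^ (p + r + 1) < (2 ^ p + 2 ^ i) * (2 ^ r + 2 ^ u + 2 ^ v)) :
    TwoBitForm (p + r + 1) ((2 ^ p + 2 ^ i) * (2 ^ r + 2 ^ u + 2 ^ v)) ∨
      GoodForm (p + r + 1) ((2 ^ p + 2 ^ i) * (2 ^ r + 2 ^ u + 2 ^ v)) := by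
  -- Only the gap patterns `(p - i, r - u, u - v) = (1, 1, _), (1, 2, 1), (2, 1, 1), (2, 1, 2)`
  -- satisfy `hlb`.
  rcases (by omega : p = i + 1 ∨ p = i + 2 ∨ i + 3 ≤ p) with rfl | rfl | hp
  · rcases (by omega : r = u + 1 ∨ (r = u + 2 ∧ u = v + 1) ∨ (r = u + 2 ∧ v + 2 ≤ u) ∨
        u + 3 ≤ r) with rfl | ⟨rfl, rfl⟩ | ⟨rfl, hu⟩ | hr
    · exact Or.inr (goodForm_iff.2 (Or.inr (Or.inr (Or.inl
        ⟨i + v, i + u, by omega, by omega, by omega, by ring⟩))))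
    · exact Or.inl (Or.inr ⟨i + v, by omega, by omega, by ring⟩)
    · exact absurd hlb <| not_two_pow_lt_mul_three_two_pows (c := 1) (f := 2) (g := 2)
        le_rfl le_rfl hu (by norm_num)
    · exact absurd hlb <| not_two_pow_lt_mul_three_two_pows (c := 1) (f := 3) (g := 1)
        le_rfl hr (by omega) (by norm_num)
  · rcases (by omega : (r = u + 1 ∧ u = v + 1) ∨ (r = u + 1 ∧ u = v + 2) ∨
        (r = u + 1 ∧ v + 3 ≤ u) ∨ u + 2 ≤ r)
      with ⟨rfl, rfl⟩ | ⟨rfl, rfl⟩ | ⟨rfl, hu⟩ | hr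
    · exact Or.inr (Or.inl ⟨i + v + 1, i + v, by omega, by omega, by omega, by ring⟩)
    · exact Or.inl (Or.inr ⟨i + v, by omega, by omega, by ring⟩)
    · exact absurd hlb <| not_two_pow_lt_mul_three_two_pows (c := 2) (f := 1) (g := 3)
        le_rfl le_rfl hu (by norm_num)
    · exact absurd hlb <| not_two_pow_lt_mul_three_two_pows (c := 2) (f := 2) (g := 1)
        le_rfl hr (by omega) (by norm_num)
  · exact absurd hlb <| not_two_pow_lt_mul_three_two_pows (c := 3) (f := 1) (g := 1)
      hp (by omega) (by omega) (by norm_num)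

theorem twoBitForm_or_goodForm_mul_four_two_pows {p i r u v w : ℕ} (hi : 1 ≤ i) (hip : i < p)
    (hw : 2 ≤ w) (hvu : v < u) (hur : u < r) (hsum : r + w = u + v)
    (hlb : 2 ^ (p + r + 1) < (2 ^ p + 2 ^ i) * (2 ^ r + 2 ^ u + 2 ^ v + 2 ^ w)) :
    TwoBitForm (p + r + 1) ((2 ^ p + 2 ^ i) * (2 ^ r + 2 ^ u + 2 ^ v + 2 ^ w)) ∨
      GoodForm (p + r + 1) ((2 ^ p + 2 ^ i) * (2 ^ r + 2 ^ u + 2 ^ v + 2 ^ w)) := by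
  -- Only the gap patterns `(p - i, r - u, u - v) = (1, 1, _), (1, 2, 1), (2, 1, 1), (2, 1, 2),
  -- (3, 1, 1)` satisfy `hlb`.
  rcases (by omega : p = i + 1 ∨ p = i + 2 ∨ p = i + 3 ∨ i + 4 ≤ p)
    with rfl | rfl | rfl | hp
  · rcases (by omega : r = u + 1 ∨ (r = u + 2 ∧ u = v + 1) ∨ (r = u + 2 ∧ v + 2 ≤ u) ∨
        u + 3 ≤ r) with rfl | ⟨rfl, rfl⟩ | ⟨rfl, hu⟩ | hr
    · obtain rfl : v = w + 1 := by omega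
      rcases (by omega : u = w + 2 ∨ u = w + 3 ∨ w + 4 ≤ u) with rfl | rfl | hu
      · exact Or.inr (Or.inr (Or.inl ⟨i + w + 3, i + w + 2, i + w, by omega, by omega, by omega,
          by omega, by omega, by ring⟩))
      · exact Or.inr (Or.inl ⟨i + w + 4, i + w, by omega, by omega, by omega, by ring⟩)
      · obtain ⟨d, rfl⟩ : ∃ d, u = w + 4 + d := ⟨u - (w + 4), by omega⟩
        exact Or.inr (Or.inr (Or.inl ⟨i + w + d + 4, i + w + 3, i + w, by omega, by omega,
          by omega, by omega, by omega, by ring⟩))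
    · obtain rfl : v = w + 2 := by omega
      exact Or.inr (goodForm_iff.2 (Or.inr (Or.inr (Or.inr ⟨i + w, by omega, by omega,
        by ring⟩))))
    · exact absurd hlb <| not_two_pow_lt_mul_four_two_pows hsum (c := 1) (d := 2) (e := 4)
        le_rfl le_rfl (by omega) (by norm_num)
    · exact absurd hlb <| not_two_pow_lt_mul_four_two_pows hsum (c := 1) (d := 3) (e := 4)
        le_rfl hr (by omega) (by norm_num)
  · rcases (by omega : (r = u + 1 ∧ u = v + 1) ∨ (r = u + 1 ∧ u = v + 2) ∨
        (r = u + 1 ∧ v + 3 ≤ u) ∨ u + 2 ≤ r)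
      with ⟨rfl, rfl⟩ | ⟨rfl, rfl⟩ | ⟨rfl, hu⟩ | hr
    · obtain rfl : v = w + 1 := by omega
      exact Or.inr (goodForm_iff.2 (Or.inr (Or.inr (Or.inl
        ⟨i + w, i + w + 3, by omega, by omega, by omega, by ring⟩))))
    · obtain rfl : v = w + 1 := by omega
      exact Or.inr (goodForm_iff.2 (Or.inr (Or.inr (Or.inr ⟨i + w, by omega, by omega,
        by ring⟩))))
    · exact absurd hlb <| not_two_pow_lt_mul_four_two_pows hsum (c := 2) (d := 1) (e := 4)
        le_rfl le_rfl (by omega) (by norm_num)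
    · exact absurd hlb <| not_two_pow_lt_mul_four_two_pows hsum (c := 2) (d := 2) (e := 3)
        le_rfl hr (by omega) (by norm_num)
  · rcases (by omega : (r = u + 1 ∧ u = v + 1) ∨ (r = u + 1 ∧ v + 2 ≤ u) ∨ u + 2 ≤ r)
      with ⟨rfl, rfl⟩ | ⟨rfl, hu⟩ | hr
    · obtain rfl : v = w + 1 := by omega
      exact Or.inr (goodForm_iff.2 (Or.inr (Or.inr (Or.inr ⟨i + w, by omega, by omega,
        by ring⟩))))
    · exact absurd hlb <| not_two_pow_lt_mul_four_two_pows hsum (c := 3) (d := 1) (e := 3)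
        le_rfl le_rfl (by omega) (by norm_num)
    · exact absurd hlb <| not_two_pow_lt_mul_four_two_pows hsum (c := 3) (d := 2) (e := 3)
        le_rfl hr (by omega) (by norm_num)
  · exact absurd hlb <| not_two_pow_lt_mul_four_two_pows hsum (c := 4) (d := 1) (e := 2)
      hp (by omega) (by omega) (by norm_num)

theorem TwoBitForm.mul_goodForm {p r a b : ℕ} (ha : TwoBitForm p a) (hb : GoodForm r b)
    (hlb : 2 ^ (p + r + 1) < a * b) :
    TwoBitForm (p + r + 1) (a * b) ∨ GoodForm (p + r + 1) (a * b) := by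
  rcases ha with rfl | ⟨i, hi, hip, rfl⟩
  · rw [show p + r + 1 = r + (p + 1) by omega]
    exact Or.inr (hb.two_pow_mul _)
  -- In forms (c) and (d), `a / 2 ^ p ≤ 3 / 2` and `b / 2 ^ r ≤ 21 / 16` contradict `hlb`.
  have ha := two_pow_add_two_pow_mul_le (c := 1) hip
  rcases goodForm_iff.1 hb with ⟨u, v, hur, hvu, hv, rfl⟩ |
    ⟨u, v, w, hur, hvu, -, hw, hsum, rfl⟩ | ⟨x, y, hx, hxy, rfl, rfl⟩ |
    ⟨x, hx, rfl, rfl⟩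
  · exact twoBitForm_or_goodForm_mul_three_two_pows hi hip hv hvu hur hlb
  · exact twoBitForm_or_goodForm_mul_four_two_pows hi hip hw hvu hur hsum hlb
  · have := two_mul_two_pow_le hxy
    have hb : (2 ^ (y + 3) + 2 ^ y + 2 ^ (x + 1) + 2 ^ x) * 2 ^ 4 ≤ 21 * 2 ^ (y + 3) := by
      calc _ = 144 * 2 ^ y + 48 * 2 ^ x := by ring
        _ ≤ 21 * 2 ^ (y + 3) := by rw [pow_add]; omega
    exact absurd hlb (mul_le_two_pow_of_mul_two_pow_le ha hb (by norm_num)).not_gt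
  · have hb : (2 ^ (x + 7) + 2 ^ (x + 2) + 2 ^ (x + 1) + 2 ^ x) * 2 ^ 4 ≤ 21 * 2 ^ (x + 7) := by
      calc _ = 2160 * 2 ^ x := by ring
        _ ≤ 21 * 2 ^ (x + 7) := by rw [pow_add]; omega
    exact absurd hlb (mul_le_two_pow_of_mul_two_pow_le ha hb (by norm_num)).not_gt

theorem TwoBitForm.mul_twoBitForm_or_goodForm {p r a b : ℕ} (ha : TwoBitForm p a)
    (hb : TwoBitForm r b ∨ GoodForm r b) (hlb : 2 ^ (p + r + 1) < a * b) :
    TwoBitForm (p + r + 1) (a * b) ∨ GoodForm (p + r + 1) (a * b) :=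
  hb.elim (fun hb => Or.inl (ha.mul hb hlb)) (fun hb => ha.mul_goodForm hb hlb)

theorem twoBitForm_or_goodForm_add_two {c k m : ℕ} (hc : CanRepr 2 c k) (hk : k ≤ m + 1)
    (hlb : 2 ^ m < c + 2) (hub : c + 2 ≤ 2 ^ (m + 1)) :
    TwoBitForm m (c + 2) ∨ GoodForm m (c + 2) := by
  rcases le_or_gt c (2 ^ m) with hle | hlt
  · exact Or.inl (TwoBitForm.add_two hc.dvd (hc.le two_pos) hle hlb)
  rcases TwoBitForm.of_canRepr hc m hk hlt with rfl | ⟨j, hj, hjm, rfl⟩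
  · omega
  rcases (by omega : j = 1 ∨ 2 ≤ j) with rfl | hj₂
  · rw [show 2 ^ m + 2 ^ 1 + 2 = 2 ^ m + 2 ^ 2 by ring]
    exact Or.inl (TwoBitForm.of_pow_add_pow (by norm_num) (by omega))
  · exact Or.inr (Or.inl ⟨j, 1, hjm, hj₂, le_rfl, by ring⟩)

theorem twoBitForm_or_goodForm_add {a b p q m : ℕ} (ha : CanRepr 2 a p) (hb : CanRepr 2 b q)
    (hp : p ≤ 2) (hpq : p + q = m + 2) (hlb : 2 ^ m < a + b) (hub : a + b ≤ 2 ^ (m + 1)) :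
    TwoBitForm m (a + b) ∨ GoodForm m (a + b) := by
  have ha₂ := ha.le two_pos
  have ha₄ : a ≤ 2 ^ p := ha.le_pow le_rfl
  have := ha.dvd
  have hp₁ := ha.one_le
  rcases (by interval_cases p <;> omega : a = 2 ∨ (a = 4 ∧ p = 2)) with rfl | ⟨rfl, rfl⟩
  · rw [add_comm] at hlb hub ⊢
    exact twoBitForm_or_goodForm_add_two hb (by omega) hlb hub
  · rw [show 4 + b = b + 2 + 2 by ring] at hlb hub ⊢
    exact twoBitForm_or_goodForm_add_two (hb.add .base) (by omega) hlb hub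

theorem twoBitForm_or_goodForm_mul_of_le {a b p q : ℕ} (ha : CanRepr 2 a (p + 1))
    (hahi : 2 ^ p < a) (hb : CanRepr 2 b (q + 1)) (hblo : b ≤ 2 ^ q)
    (ihb : ∀ m, q + 1 ≤ m + 2 → 2 ^ m < b → b ≤ 2 ^ (m + 1) →
      TwoBitForm m b ∨ GoodForm m b)
    (hlb : 2 ^ (p + q) < a * b) : TwoBitForm (p + q) (a * b) ∨ GoodForm (p + q) (a * b) := by
  obtain ⟨q, rfl⟩ : ∃ q', q = q' + 1 := ⟨q - 1, by
    have := hb.le two_pos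
    rcases q with _ | q <;> omega⟩
  have hbhi : 2 ^ q < b :=
    two_pow_lt_of_two_pow_lt_mul (ha.le_pow le_rfl) (by omega) (mul_comm a b ▸ hlb)
  rw [show p + (q + 1) = p + q + 1 by omega] at hlb ⊢
  exact (TwoBitForm.of_canRepr ha p le_rfl hahi).mul_twoBitForm_or_goodForm
    (ihb q (by omega) hbhi hblo) hlb

theorem twoBitForm_or_goodForm_of_canRepr {n k : ℕ} (h : CanRepr 2 n k) :
    ∀ m, k ≤ m + 2 → 2 ^ m < n → n ≤ 2 ^ (m + 1) → TwoBitForm m n ∨ GoodForm m n := by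
  induction h with
  | base => exact fun m _ hlb _ => Or.inl (TwoBitForm.of_canRepr .base m (by omega) hlb)
  | @add a b p q ha hb _ _ =>
    intro m hk hlb hub
    rcases Nat.lt_or_ge (p + q) (m + 2) with hk' | hk'
    · exact Or.inl (TwoBitForm.of_canRepr (ha.add hb) m (by omega) hlb)
    rcases le_or_le_of_two_pow_lt_add (ha.le_pow le_rfl) (hb.le_pow le_rfl) hk hlb with hp | hq
    · exact twoBitForm_or_goodForm_add ha hb hp (by omega) hlb hub
    · rw [add_comm] at hlb hub ⊢
      exact twoBitForm_or_goodForm_add hb ha hq (by omega) hlb hub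
  | @mul a b p q ha hb iha ihb =>
    intro m hk hlb hub
    rcases Nat.lt_or_ge (p + q) (m + 2) with hk' | hk'
    · exact Or.inl (TwoBitForm.of_canRepr (ha.mul hb) m (by omega) hlb)
    obtain ⟨p, rfl⟩ : ∃ p', p = p' + 1 := ⟨p - 1, by have := ha.one_le; omega⟩
    obtain ⟨q, rfl⟩ : ∃ q', q = q' + 1 := ⟨q - 1, by have := hb.one_le; omega⟩
    obtain rfl : m = p + q := by omega
    by_cases hahi : 2 ^ p < a <;> by_cases hbhi : 2 ^ q < b
    · exact Or.inr ((TwoBitForm.of_canRepr ha p le_rfl hahi).goodForm_mul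
        (TwoBitForm.of_canRepr hb q le_rfl hbhi) hub)
    · exact twoBitForm_or_goodForm_mul_of_le ha hahi hb (not_lt.1 hbhi) ihb hlb
    · rw [mul_comm, add_comm p q] at hlb ⊢
      exact twoBitForm_or_goodForm_mul_of_le hb hbhi ha (not_lt.1 hahi) iha hlb
    · have := mul_le_two_pow_add (not_lt.1 hahi) (not_lt.1 hbhi)
      omega

theorem stmt_9_general (m n : ℕ) (hlb : 2 ^ m < n) (hub : n ≤ 2 ^ (m + 1)) :
    complexity 2 n = m + 2 ↔ GoodForm m n := by
  constructor
  · intro hc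
    have hn : CanRepr 2 n (m + 2) :=
      hc ▸ canRepr_complexity (Nat.nonempty_of_pos_sInf (show 0 < complexity 2 n by omega))
    rcases twoBitForm_or_goodForm_of_canRepr hn m le_rfl hlb hub with h | h
    · have := complexity_le h.canRepr
      omega
    · exact h
  · intro hg
    have hn := canRepr_complexity ⟨_, hg.canRepr⟩
    have hle := complexity_le hg.canRepr
    have hge : m < complexity 2 n :=
      (Nat.pow_lt_pow_iff_right one_lt_two).1 (hlb.trans_le (hn.le_pow le_rfl))
    have hne : complexity 2 n ≠ m + 1 := fun h =>
      hg.not_twoBitForm (TwoBitForm.of_canRepr hn m h.le hlb)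
    omega

theorem stmt_9 (m n : ℕ) (hm : 3 ≤ m) (hn : 0 < n) (heven : 2 ∣ n)
    (hlb : 2 ^ m < n) (hub : n ≤ 2 ^ (m + 1)) :
    complexity 2 n = m + 2 ↔ GoodForm m n :=
  stmt_9_general m n hlb hub
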